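/- Let Ω be an open subset of ℝⁿ, p ∈ [1,∞], and w : (0,∞) → [0,∞) not identically zero with lim sup_{r→0} w(r) r^{n/p} > 0. Then M_p^w(Ω) is continuously embedded into L^∞(Ω); in particular ‖f‖_{L^∞(Ω)} ≤ (ω_n^{1/p} lim sup_{r→0} w(r)r^{n/p})^{-1} ‖f‖_{M_p^w(Ω)} for all f ∈ M_p^w(Ω), where ω_n is the measure of the unit ball in ℝⁿ. -/

import Mathlib

/-
By Hölder, the mean of `|f|` over a ball `B(y,t) ⊆ Ω` is at most
`|B(y,t)|^{-1/p} ‖f‖_{L^p(B(y,t))} = (ω_n^{1/p} t^{n/p})^{-1} ‖f‖_{L^p(B(y,t))}`, so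
`w(t) t^{n/p} ω_n^{1/p}` times that mean is bounded by the Morrey norm. At a Lebesgue point `y`
the means tend to `|f(y)|`, and passing to the lim sup as `t → 0` gives
`ω_n^{1/p} (lim sup w(t) t^{n/p}) |f(y)| ≤ ‖f‖_{M_p^w}` for almost every `y ∈ Ω`.
Lebesgue's theorem applies because `f 1_Ω` is locally integrable: `w(r) > 0` for some `r`, and
every ball of radius `r/2` meeting `Ω` lies in a ball of radius `r` centred in `Ω`.
-/
open MeasureTheory Metric Set Filter ENNReal

/-- The (generalized) Morrey quantity `|f|_{ρ,w,p,Ω}`: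
`sup_{(x,r) ∈ Ω × (0,ρ)} w(r) ‖f‖_{L^p(B(x,r) ∩ Ω)}`, valued in `ℝ≥0∞`. -/
noncomputable def morreyNorm {n : ℕ} (Ω : Set (EuclideanSpace ℝ (Fin n)))
    (p : ℝ≥0∞) (w : ℝ → ℝ) (ρ : ℝ≥0∞) (f : EuclideanSpace ℝ (Fin n) → ℝ) : ℝ≥0∞ :=
  ⨆ x ∈ Ω, ⨆ r ∈ {r : ℝ | 0 < r ∧ ENNReal.ofReal r < ρ},
    ENNReal.ofReal (w r) * eLpNorm f p (volume.restrict (ball x r ∩ Ω))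

open Topology

section HaarBalls

variable {E : Type*} [NormedAddCommGroup E] [NormedSpace ℝ E] [FiniteDimensional ℝ E]
  [MeasurableSpace E] [BorelSpace E] (μ : Measure E) [μ.IsAddHaarMeasure]

lemma ball_ae_eq_closedBall (x : E) {r : ℝ} (hr : r ≠ 0) : ball x r =ᵐ[μ] closedBall x r :=
  ae_eq_set.2 ⟨by rw [sdiff_eq_empty.2 ball_subset_closedBall, measure_empty],
    by rw [closedBall_sdiff_ball]; exact Measure.addHaar_sphere_of_ne_zero μ x hr⟩

lemma ae_tendsto_setLAverage_ball_enorm {F : Type*} [NormedAddCommGroup F] {f : E → F}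
    (hf : LocallyIntegrable f μ) :
    ∀ᵐ x ∂μ, Tendsto (fun r => ⨍⁻ y in ball x r, ‖f y‖ₑ ∂μ) (𝓝[>] 0) (𝓝 ‖f x‖ₑ) := by
  have hnorm : LocallyIntegrable (fun y => ‖f y‖) μ :=
    locallyIntegrableOn_univ.1 (hf.locallyIntegrableOn univ).norm
  filter_upwards [IsUnifLocDoublingMeasure.ae_tendsto_average μ hnorm 1] with x hx
  have hclosed := hx (fun _ => x) (fun r => r) tendsto_id <| eventually_nhdsWithin_of_forall
    fun r (hr : 0 < r) => by simpa using hr.le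
  rw [← ofReal_norm]
  refine (ENNReal.tendsto_ofReal hclosed).congr' ?_
  filter_upwards [self_mem_nhdsWithin] with r (hr : 0 < r)
  rw [ofReal_setAverage (hnorm.integrableOn_isCompact (isCompact_closedBall x r))
      (Eventually.of_forall fun _ => norm_nonneg _),
    ← setLAverage_eq, setLAverage_congr (ball_ae_eq_closedBall μ x hr.ne').symm]
  simp only [ofReal_norm]

end HaarBalls

lemma laverage_enorm_mul_rpow_le_eLpNorm {α F : Type*} [MeasurableSpace α] {μ : Measure α}
    [NormedAddCommGroup F] {f : α → F} {p : ℝ≥0∞} (hp : 1 ≤ p)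
    (hf : AEStronglyMeasurable f μ) :
    (⨍⁻ x, ‖f x‖ₑ ∂μ) * μ univ ^ (1 / p.toReal) ≤ eLpNorm f p μ := by
  set m := μ univ
  rcases eq_or_ne m 0 with hm0 | hm0
  · simp [Measure.measure_univ_eq_zero.1 hm0]
  rcases eq_or_ne m ⊤ with hmt | hmt
  · simp [laverage_eq, m, hmt] -- `⨍⁻` with respect to an infinite measure is `0`
  have holder : ∫⁻ x, ‖f x‖ₑ ∂μ ≤ eLpNorm f p μ * m ^ (1 - 1 / p.toReal) := by
    simpa [eLpNorm_one_eq_lintegral_enorm] using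
      eLpNorm_le_eLpNorm_mul_rpow_measure_univ hp hf
  have hsplit : m ^ (1 - 1 / p.toReal) * m ^ (1 / p.toReal) = m := by
    rw [← ENNReal.rpow_add _ _ hm0 hmt, sub_add_cancel, ENNReal.rpow_one]
  calc (⨍⁻ x, ‖f x‖ₑ ∂μ) * m ^ (1 / p.toReal)
      = (∫⁻ x, ‖f x‖ₑ ∂μ) * m ^ (1 / p.toReal) * m⁻¹ := by
        rw [laverage_eq, ENNReal.div_eq_inv_mul]; ring
    _ ≤ eLpNorm f p μ * m ^ (1 - 1 / p.toReal) * m ^ (1 / p.toReal) * m⁻¹ := by gcongr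
    _ = eLpNorm f p μ * (m ^ (1 - 1 / p.toReal) * m ^ (1 / p.toReal)) * m⁻¹ := by ring
    _ = eLpNorm f p μ := by
        rw [hsplit, mul_assoc, ENNReal.mul_inv_cancel hm0 hmt, mul_one]

section Morrey

variable {n : ℕ} {Ω : Set (EuclideanSpace ℝ (Fin n))} {p : ℝ≥0∞} {w : ℝ → ℝ}
  {f : EuclideanSpace ℝ (Fin n) → ℝ}

lemma le_morreyNorm {ρ : ℝ≥0∞} {x : EuclideanSpace ℝ (Fin n)} {r : ℝ} (hx : x ∈ Ω) (hr : 0 < r)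
    (hrρ : ENNReal.ofReal r < ρ) :
    ENNReal.ofReal (w r) * eLpNorm f p (volume.restrict (ball x r ∩ Ω)) ≤ morreyNorm Ω p w ρ f :=
  le_iSup₂_of_le x hx <| le_iSup₂_of_le (f := fun r _ =>
    ENNReal.ofReal (w r) * eLpNorm f p (volume.restrict (ball x r ∩ Ω))) r ⟨hr, hrρ⟩ le_rfl

lemma memLp_restrict_ball_inter_of_morreyNorm_ne_top {ρ : ℝ≥0∞} {x : EuclideanSpace ℝ (Fin n)}
    {r : ℝ} (hf : AEStronglyMeasurable f volume) (hx : x ∈ Ω) (hr : 0 < r)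
    (hrρ : ENNReal.ofReal r < ρ) (hwr : 0 < w r) (hM : morreyNorm Ω p w ρ f ≠ ⊤) :
    MemLp f p (volume.restrict (ball x r ∩ Ω)) :=
  ⟨hf.restrict, ENNReal.lt_top_of_mul_ne_top_right
    (ne_top_of_le_ne_top hM (le_morreyNorm hx hr hrρ)) (ENNReal.ofReal_pos.2 hwr).ne'⟩

lemma locallyIntegrable_indicator_of_morreyNorm_ne_top {r : ℝ} (hΩ : MeasurableSet Ω)
    (hp : 1 ≤ p) (hf : AEStronglyMeasurable f volume) (hr : 0 < r) (hwr : 0 < w r)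
    (hM : morreyNorm Ω p w ⊤ f ≠ ⊤) : LocallyIntegrable (Ω.indicator f) volume := by
  intro x
  refine ⟨ball x (r / 2), ball_mem_nhds x (half_pos hr), ?_⟩
  by_cases hmeet : (ball x (r / 2) ∩ Ω).Nonempty
  · obtain ⟨x', hxx', hx'Ω⟩ := hmeet
    have hsub : ball x (r / 2) ⊆ ball x' r := by
      refine ball_subset_ball' ?_
      linarith [mem_ball'.1 hxx']
    have hfin : IsFiniteMeasure (volume.restrict (ball x' r ∩ Ω)) :=
      isFiniteMeasure_restrict.2
        (measure_mono inter_subset_left |>.trans_lt measure_ball_lt_top).ne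
    refine IntegrableOn.mono_set ?_ hsub
    rw [integrableOn_indicator_iff hΩ, inter_comm]
    exact (memLp_restrict_ball_inter_of_morreyNorm_ne_top hf hx'Ω hr ofReal_lt_top hwr
      hM).integrable hp
  · refine integrableOn_zero.congr_fun (fun y hy => ?_) measurableSet_ball
    exact (indicator_of_notMem (fun hyΩ => hmeet ⟨y, hy, hyΩ⟩) f).symm

lemma ofReal_rpow_mul_volume_ball_rpow (y : EuclideanSpace ℝ (Fin n)) {t : ℝ} (ht : 0 < t) :
    ENNReal.ofReal (t ^ ((n : ℝ) / p.toReal)) *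
        volume (ball (0 : EuclideanSpace ℝ (Fin n)) 1) ^ (1 / p.toReal) =
      volume (ball y t) ^ (1 / p.toReal) := by
  rw [Measure.addHaar_ball_of_pos volume y ht, finrank_euclideanSpace_fin,
    ENNReal.mul_rpow_of_nonneg _ _ (by positivity),
    ENNReal.ofReal_rpow_of_nonneg (by positivity) (by positivity), ← Real.rpow_natCast_mul ht.le,
    mul_one_div]

lemma ofReal_mul_rpow_mul_laverage_le_morreyNorm (hp : 1 ≤ p)
    (hf : AEStronglyMeasurable f volume) {y : EuclideanSpace ℝ (Fin n)} {t : ℝ} (ht : 0 < t)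
    (hball : ball y t ⊆ Ω) :
    ENNReal.ofReal (w t * t ^ ((n : ℝ) / p.toReal)) *
        (volume (ball (0 : EuclideanSpace ℝ (Fin n)) 1) ^ (1 / p.toReal) *
          ⨍⁻ z in ball y t, ‖f z‖ₑ ∂volume) ≤ morreyNorm Ω p w ⊤ f := by
  calc ENNReal.ofReal (w t * t ^ ((n : ℝ) / p.toReal)) *
        (volume (ball (0 : EuclideanSpace ℝ (Fin n)) 1) ^ (1 / p.toReal) *
          ⨍⁻ z in ball y t, ‖f z‖ₑ ∂volume)
      = ENNReal.ofReal (w t) * ((⨍⁻ z in ball y t, ‖f z‖ₑ ∂volume) *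
          volume.restrict (ball y t) univ ^ (1 / p.toReal)) := by
        rw [ENNReal.ofReal_mul' (by positivity), Measure.restrict_apply_univ,
          ← ofReal_rpow_mul_volume_ball_rpow y ht]
        ring
    _ ≤ ENNReal.ofReal (w t) * eLpNorm f p (volume.restrict (ball y t ∩ Ω)) := by
        rw [inter_eq_self_of_subset_left hball]
        gcongr
        exact laverage_enorm_mul_rpow_le_eLpNorm hp hf.restrict
    _ ≤ morreyNorm Ω p w ⊤ f := le_morreyNorm (hball (mem_ball_self ht)) ht ofReal_lt_top

lemma ae_rpow_mul_limsup_mul_enorm_le_morreyNorm (hΩ : IsOpen Ω) (hp : 1 ≤ p)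
    (hf : AEStronglyMeasurable f volume) (hloc : LocallyIntegrable (Ω.indicator f) volume) :
    ∀ᵐ y ∂volume.restrict Ω,
      volume (ball (0 : EuclideanSpace ℝ (Fin n)) 1) ^ (1 / p.toReal) *
        limsup (fun r : ℝ => ENNReal.ofReal (w r * r ^ ((n : ℝ) / p.toReal))) (𝓝[>] 0) *
          ‖f y‖ₑ ≤ morreyNorm Ω p w ⊤ f := by
  set c := volume (ball (0 : EuclideanSpace ℝ (Fin n)) 1) ^ (1 / p.toReal)
  filter_upwards [ae_restrict_mem hΩ.measurableSet,
    ae_restrict_of_ae (ae_tendsto_setLAverage_ball_enorm volume hloc)] with y hyΩ hy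
  have hsmall : ∀ᶠ t in 𝓝[>] 0, 0 < t ∧ ball y t ⊆ Ω :=
    eventually_mem_nhdsWithin.and <| nhdsWithin_le_nhds <|
      (eventually_closedBall_subset (hΩ.mem_nhds hyΩ)).mono fun _ h =>
        ball_subset_closedBall.trans h
  have htend : Tendsto (fun t => c * ⨍⁻ z in ball y t, ‖f z‖ₑ ∂volume) (𝓝[>] 0)
      (𝓝 (c * ‖f y‖ₑ)) := by
    rw [indicator_of_mem hyΩ] at hy
    refine ENNReal.Tendsto.const_mul (hy.congr' ?_)
      (Or.inr (ENNReal.rpow_ne_top_of_nonneg (by positivity) measure_ball_lt_top.ne))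
    filter_upwards [hsmall] with t ⟨_, ht⟩
    exact setLAverage_congr_fun measurableSet_ball fun z hz => by rw [indicator_of_mem (ht hz)]
  calc c * limsup (fun r : ℝ => ENNReal.ofReal (w r * r ^ ((n : ℝ) / p.toReal))) (𝓝[>] 0) *
        ‖f y‖ₑ
      = limsup (fun r : ℝ => ENNReal.ofReal (w r * r ^ ((n : ℝ) / p.toReal))) (𝓝[>] 0) *
          liminf (fun t => c * ⨍⁻ z in ball y t, ‖f z‖ₑ ∂volume) (𝓝[>] 0) := by
        rw [htend.liminf_eq]; ring
    _ ≤ limsup ((fun r : ℝ => ENNReal.ofReal (w r * r ^ ((n : ℝ) / p.toReal))) *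
          fun t => c * ⨍⁻ z in ball y t, ‖f z‖ₑ ∂volume) (𝓝[>] 0) := ENNReal.le_limsup_mul
    _ ≤ morreyNorm Ω p w ⊤ f := limsup_le_of_le (by isBoundedDefault) <|
        hsmall.mono fun _ ⟨ht, hball⟩ => ofReal_mul_rpow_mul_laverage_le_morreyNorm hp hf ht hball

end Morrey

theorem stmt11_general (n : ℕ) (Ω : Set (EuclideanSpace ℝ (Fin n))) (hΩ : IsOpen Ω)
    (p : ℝ≥0∞) (hp : 1 ≤ p) (w : ℝ → ℝ)
    (hpos : 0 < Filter.limsup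
      (fun r : ℝ => ENNReal.ofReal (w r * r ^ ((n : ℝ) / p.toReal)))
      (nhdsWithin 0 (Set.Ioi 0))) :
    ∀ f : EuclideanSpace ℝ (Fin n) → ℝ, Measurable f →
      morreyNorm Ω p w ⊤ f < ⊤ →
      MemLp f ⊤ (volume.restrict Ω) ∧
      eLpNorm f ⊤ (volume.restrict Ω) ≤
        ((volume (ball (0 : EuclideanSpace ℝ (Fin n)) 1)) ^ (1 / p.toReal) *
          Filter.limsup
            (fun r : ℝ => ENNReal.ofReal (w r * r ^ ((n : ℝ) / p.toReal)))
            (nhdsWithin 0 (Set.Ioi 0)))⁻¹ * morreyNorm Ω p w ⊤ f := by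
  intro f hf hM
  obtain ⟨r, hr, hwr⟩ : ∃ r > 0, 0 < w r := by
    obtain ⟨r, hr_lt, hr⟩ := ((frequently_lt_of_lt_limsup (by isBoundedDefault) hpos)
      |>.and_eventually self_mem_nhdsWithin).exists
    exact ⟨r, hr, (mul_pos_iff_of_pos_right (Real.rpow_pos_of_pos hr _)).1
      (ENNReal.ofReal_pos.1 hr_lt)⟩
  set C := volume (ball (0 : EuclideanSpace ℝ (Fin n)) 1) ^ (1 / p.toReal) *
    limsup (fun r : ℝ => ENNReal.ofReal (w r * r ^ ((n : ℝ) / p.toReal))) (𝓝[>] 0)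
  have hC : C ≠ 0 :=
    mul_ne_zero (ENNReal.rpow_pos (measure_ball_pos _ _ one_pos) measure_ball_lt_top.ne).ne'
      hpos.ne'
  have hbound : eLpNorm f ⊤ (volume.restrict Ω) ≤ C⁻¹ * morreyNorm Ω p w ⊤ f := by
    refine eLpNorm_exponent_top.trans_le (eLpNormEssSup_le_of_ae_enorm_bound ?_)
    filter_upwards [ae_rpow_mul_limsup_mul_enorm_le_morreyNorm hΩ hp hf.aestronglyMeasurable
      (locallyIntegrable_indicator_of_morreyNorm_ne_top hΩ.measurableSet hp
        hf.aestronglyMeasurable hr hwr hM.ne)] with y hy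
    rwa [← ENNReal.div_eq_inv_mul, ENNReal.le_div_iff_mul_le (.inl hC) (.inr hM.ne), mul_comm]
  exact ⟨⟨hf.aestronglyMeasurable,
    hbound.trans_lt (ENNReal.mul_lt_top (ENNReal.inv_lt_top.2 (pos_iff_ne_zero.2 hC)) hM)⟩, hbound⟩

/-- If `limsup_{r→0} w(r) r^{n/p} > 0`, then `M_p^w(Ω)` embeds into `L^∞(Ω)`, with
`‖f‖_∞ ≤ (ω_n^{1/p} · limsup)⁻¹ ‖f‖_{M_p^w}`. -/
theorem stmt11 (n : ℕ) (Ω : Set (EuclideanSpace ℝ (Fin n))) (hΩ : IsOpen Ω)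
    (p : ℝ≥0∞) (hp : 1 ≤ p) (w : ℝ → ℝ) (hw : ∀ r > (0:ℝ), 0 ≤ w r)
    (hw0 : ∃ r₀ > (0:ℝ), w r₀ ≠ 0)
    (hpos : 0 < Filter.limsup
      (fun r : ℝ => ENNReal.ofReal (w r * r ^ ((n : ℝ) / p.toReal)))
      (nhdsWithin 0 (Set.Ioi 0))) :
    ∀ f : EuclideanSpace ℝ (Fin n) → ℝ, Measurable f →
      morreyNorm Ω p w ⊤ f < ⊤ →
      MemLp f ⊤ (volume.restrict Ω) ∧
      eLpNorm f ⊤ (volume.restrict Ω) ≤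
        ((volume (ball (0 : EuclideanSpace ℝ (Fin n)) 1)) ^ (1 / p.toReal) *
          Filter.limsup
            (fun r : ℝ => ENNReal.ofReal (w r * r ^ ((n : ℝ) / p.toReal)))
            (nhdsWithin 0 (Set.Ioi 0)))⁻¹ * morreyNorm Ω p w ⊤ f :=
  stmt11_general n Ω hΩ p hp w hpos
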